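/- Let 0 < ε ≤ 0.1, n ≥ 1 and T ≥ 1. Then the Kullback–Leibler divergence between the mixture of product distributions P_mix^T = (1/n)·Σ_{v=1}^n P_v^T and the product distribution P_0^T satisfies D_KL( P_mix^T ‖ P_0^T ) ≤ ( (1 + 4ε²)^T − 1 ) / n. -/

import Mathlib

open scoped BigOperators

/-- The sample space of a single round: an advice vector `a ∈ {0,1}ⁿ`
and a correct-arm indicator `c ∈ {0,1}`. -/
abbrev Omg (n : ℕ) := (Fin n → Bool) × Bool

/-- Under `P0`, the advice vector is uniform on `{0,1}ⁿ` and the correct-arm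
indicator is uniform on `{0,1}`, independently. -/
noncomputable def P0 (n : ℕ) : Omg n → ℝ := fun _ => (1 / 2 : ℝ) ^ (n + 1)

/-- Under `Pv n ε v`, the advice vector is uniform on `{0,1}ⁿ` and, conditionally on it,
the correct-arm indicator equals its `v`-th entry with probability `1/2 + ε`. -/
noncomputable def Pv (n : ℕ) (ε : ℝ) (v : Fin n) : Omg n → ℝ := fun w =>
  (1 / 2 : ℝ) ^ n * (if w.2 = w.1 v then 1 / 2 + ε else 1 / 2 - ε)

/-- `T`-fold product of a probability mass function on `Omg n`. -/
noncomputable def prodP {n : ℕ} (T : ℕ) (P : Omg n → ℝ) : (Fin T → Omg n) → ℝ :=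
  fun g => ∏ t, P (g t)

/-- The uniform mixture `P_mix^T = (1/n) Σ_v P_v^T`. -/
noncomputable def Pmix (n : ℕ) (ε : ℝ) (T : ℕ) : (Fin T → Omg n) → ℝ := fun g =>
  (1 / (n : ℝ)) * ∑ v : Fin n, prodP T (Pv n ε v) g

/-- Kullback–Leibler divergence between two probability mass functions on a finite type
(with the convention `0 · ln 0 = 0`, which holds definitionally here since
`Real.log 0 = 0` and `0 * x = 0`). -/
noncomputable def klDiv {α : Type*} [Fintype α] (P Q : α → ℝ) : ℝ :=
  ∑ g, P g * Real.log (P g / Q g)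


open Finset Real

/-! Since `p log (p/q) ≤ p²/q - p`, the divergence is bounded by the χ²-divergence
`∑ P_mix² / P_0^T - 1`. Expanding the square, the rounds factorize:
`∑ P_mix² / P_0^T = n⁻² ∑_{v,v'} (∑_w P_v P_v' / P_0)^T`.
Writing `P_v = P_0 (1 + 2ε χ_v)` with `χ_v = ±1` recording whether `c = a_v`, the signs `χ_v`
have mean zero and are orthonormal under `P_0` (flip `c`, resp. flip `a_v'`), so the one-round
overlap is `1 + 4ε²` for `v = v'` and `1` otherwise, and the χ²-divergence is
exactly `((1 + 4ε²)^T - 1) / n`. -/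

lemma mul_log_div_le_sq_div_sub {p q : ℝ} (hp : 0 ≤ p) (hq : 0 < q) :
    p * log (p / q) ≤ p ^ 2 / q - p := by
  rcases hp.eq_or_lt with rfl | hp
  · simp
  calc p * log (p / q) ≤ p * (p / q - 1) :=
        mul_le_mul_of_nonneg_left (log_le_sub_one_of_pos (div_pos hp hq)) hp.le
    _ = p ^ 2 / q - p := by ring

lemma klDiv_le_sum_sq_div_sub_sum {α : Type*} [Fintype α] {P Q : α → ℝ}
    (hP : ∀ g, 0 ≤ P g) (hQ : ∀ g, 0 < Q g) :
    klDiv P Q ≤ ∑ g, P g ^ 2 / Q g - ∑ g, P g := by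
  rw [← sum_sub_distrib]
  exact sum_le_sum fun g _ => mul_log_div_le_sq_div_sub (hP g) (hQ g)

lemma sum_sq_sum_prod_div_prod {𝕜 ι α : Type*} [Field 𝕜] [Fintype ι] [Fintype α] (T : ℕ)
    (P : ι → α → 𝕜) (Q : α → 𝕜) :
    ∑ g : Fin T → α, (∑ i, ∏ t, P i (g t)) ^ 2 / ∏ t, Q (g t)
      = ∑ i, ∑ j, (∑ w, P i w * P j w / Q w) ^ T := by
  simp_rw [sq, sum_mul_sum, sum_div, ← prod_mul_distrib, ← prod_div_distrib, Fintype.sum_pow]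
  rw [sum_comm]
  exact sum_congr rfl fun i _ => sum_comm

def agreeSign {n : ℕ} (v : Fin n) (w : Omg n) : ℝ := if w.2 = w.1 v then 1 else -1

lemma sum_P0 (n : ℕ) : ∑ w, P0 n w = 1 := by
  simp [P0, ← pow_succ]

lemma sum_P0_mul_agreeSign {n : ℕ} (v : Fin n) : ∑ w, P0 n w * agreeSign v w = 0 := by
  refine sum_ninvolution (fun w => (w.1, !w.2)) (fun w => ?_) (fun w _ => by simp [Prod.ext_iff])
    (fun _ => mem_univ _) (fun w => by simp)
  unfold agreeSign P0
  cases w.2 <;> cases w.1 v <;> norm_num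

lemma agreeSign_mul_self {n : ℕ} (v : Fin n) (w : Omg n) : agreeSign v w * agreeSign v w = 1 := by
  unfold agreeSign; split_ifs <;> norm_num

lemma sum_P0_mul_agreeSign_mul_agreeSign {n : ℕ} (v v' : Fin n) :
    ∑ w, P0 n w * (agreeSign v w * agreeSign v' w) = if v = v' then 1 else 0 := by
  split_ifs with h
  · simp [h, agreeSign_mul_self, sum_P0]
  classical
  refine sum_ninvolution (fun w => (Function.update w.1 v' (!w.1 v'), w.2)) (fun w => ?_)
    (fun w _ hw => by simpa using congrFun (congrArg Prod.fst hw) v') (fun _ => mem_univ _)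
    (fun w => by simp)
  unfold agreeSign P0
  simp only [Function.update_of_ne h, Function.update_self]
  cases w.2 <;> cases w.1 v <;> cases w.1 v' <;> norm_num

lemma Pv_eq_P0_mul (n : ℕ) (ε : ℝ) (v : Fin n) (w : Omg n) :
    Pv n ε v w = P0 n w * (1 + 2 * ε * agreeSign v w) := by
  unfold Pv P0 agreeSign
  split_ifs <;> ring

lemma sum_Pv (n : ℕ) (ε : ℝ) (v : Fin n) : ∑ w, Pv n ε v w = 1 := by
  simp_rw [Pv_eq_P0_mul, mul_add, sum_add_distrib, mul_left_comm _ (2 * ε), ← mul_sum,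
    sum_P0_mul_agreeSign, mul_one, sum_P0, mul_zero, add_zero]

lemma sum_Pv_mul_Pv_div_P0 (n : ℕ) (ε : ℝ) (v v' : Fin n) :
    ∑ w, Pv n ε v w * Pv n ε v' w / P0 n w = if v = v' then 1 + 4 * ε ^ 2 else 1 := by
  have hterm : ∀ w, Pv n ε v w * Pv n ε v' w / P0 n w = P0 n w +
      2 * ε * (P0 n w * agreeSign v w) + 2 * ε * (P0 n w * agreeSign v' w)
        + 4 * ε ^ 2 * (P0 n w * (agreeSign v w * agreeSign v' w)) := fun w => by
    have : P0 n w ≠ 0 := by unfold P0; positivity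
    rw [Pv_eq_P0_mul, Pv_eq_P0_mul]; field_simp; ring
  simp_rw [hterm, sum_add_distrib, ← mul_sum, sum_P0, sum_P0_mul_agreeSign,
    sum_P0_mul_agreeSign_mul_agreeSign]
  split_ifs <;> ring

lemma Pv_nonneg {n : ℕ} {ε : ℝ} (hε : |ε| ≤ 1 / 2) (v : Fin n) (w : Omg n) : 0 ≤ Pv n ε v w := by
  obtain ⟨hlo, hhi⟩ := abs_le.1 hε
  exact mul_nonneg (by positivity) (by split_ifs <;> linarith)

lemma Pmix_nonneg {n T : ℕ} {ε : ℝ} (hε : |ε| ≤ 1 / 2) (g : Fin T → Omg n) :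
    0 ≤ Pmix n ε T g :=
  mul_nonneg (by positivity) (sum_nonneg fun v _ => prod_nonneg fun t _ => Pv_nonneg hε v _)

lemma prodP_P0_pos {n T : ℕ} (g : Fin T → Omg n) : 0 < prodP T (P0 n) g :=
  prod_pos fun t _ => by unfold P0; positivity

lemma sum_Pmix {n : ℕ} (hn : n ≠ 0) (ε : ℝ) (T : ℕ) : ∑ g, Pmix n ε T g = 1 := by
  simp_rw [Pmix, ← mul_sum, prodP]
  rw [sum_comm]
  simp_rw [← Fintype.sum_pow, sum_Pv]
  simp [hn]

lemma sum_sq_Pmix_div_prodP_P0 {n : ℕ} (hn : n ≠ 0) (ε : ℝ) (T : ℕ) :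
    ∑ g, Pmix n ε T g ^ 2 / prodP T (P0 n) g = 1 + ((1 + 4 * ε ^ 2) ^ T - 1) / n := by
  have hsplit : ∀ v v' : Fin n, (if v = v' then 1 + 4 * ε ^ 2 else 1) ^ T
      = 1 + if v = v' then (1 + 4 * ε ^ 2) ^ T - 1 else 0 := fun v v' => by
    split_ifs <;> ring
  simp_rw [Pmix, prodP, mul_pow, mul_div_assoc, ← mul_sum, sum_sq_sum_prod_div_prod,
    sum_Pv_mul_Pv_div_P0, hsplit, sum_add_distrib, sum_ite_eq, mem_univ, if_true, sum_const,
    card_univ, Fintype.card_fin, nsmul_eq_mul, mul_one]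
  field_simp

theorem stmt4_general (n T : ℕ) (ε : ℝ) (hε : 0 < ε) (hε' : ε ≤ 0.1) :
    klDiv (Pmix n ε T) (prodP T (P0 n)) ≤ ((1 + 4 * ε ^ 2) ^ T - 1) / (n : ℝ) := by
  rcases eq_or_ne n 0 with rfl | hn
  · -- `Pmix 0 ε T = 0`, and the right-hand side is a division by `0`
    simp [klDiv, Pmix]
  have hε_abs : |ε| ≤ 1 / 2 := abs_le.2 ⟨by linarith, by norm_num at hε'; linarith⟩
  calc klDiv (Pmix n ε T) (prodP T (P0 n))
      ≤ ∑ g, Pmix n ε T g ^ 2 / prodP T (P0 n) g - ∑ g, Pmix n ε T g :=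
        klDiv_le_sum_sq_div_sub_sum (Pmix_nonneg hε_abs) prodP_P0_pos
    _ = ((1 + 4 * ε ^ 2) ^ T - 1) / n := by
        rw [sum_sq_Pmix_div_prodP_P0 hn, sum_Pmix hn]; ring

/-- `D_KL(P_mix^T ‖ P_0^T) ≤ ((1 + 4ε²)^T − 1) / n`. -/
theorem stmt4 (n T : ℕ) (ε : ℝ) (hε : 0 < ε) (hε' : ε ≤ 0.1) (hn : 1 ≤ n) (hT : 1 ≤ T) :
    klDiv (Pmix n ε T) (prodP T (P0 n)) ≤ ((1 + 4 * ε ^ 2) ^ T - 1) / (n : ℝ) :=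
  stmt4_general n T ε hε hε'
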